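/- arXiv:2205.03372 — 3 statements merged into one kernel-verified Lean document; each statement's English description precedes it below -/
import Mathlib

section
/- Any sub-travel of a cost-optimal travel is cost-optimal: if T = T1 ⊕ T' ⊕ T2 is a travel from u to v arriving at time t with minimum cost among all travels with the same start and end node and times, then T' has minimum cost among travels with the same start and end (node, time) pairs as T'. -/
variable {V : Type*}

/-- Validity of a travel in an evolving graph `E`: along the sequence, a change
of node requires equal times and an edge at that time; time changes at a fixed
node are unconstrained. -/
def IsTravel (E : ℕ → V → V → Prop) : List (V × ℕ) → Prop
  | [] => True
  | [_] => True
  | (u, t) :: (v, s) :: rest =>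
      (u ≠ v → t = s ∧ E t u v) ∧ IsTravel E ((v, s) :: rest)

/-- Backward cost of a travel for a cost function `τ : ℤ → ℝ`
(applied to the differences `t_i - t_{i+1}`). -/
def travelCost (τ : ℤ → ℝ) : List (V × ℕ) → ℝ
  | [] => 0
  | [_] => 0
  | (_, t) :: (v, s) :: rest => τ ((t : ℤ) - (s : ℤ)) + travelCost τ ((v, s) :: rest)

/-- `T` is a travel in `E` starting at the (node, time) pair `a` and ending at `b`. -/
def TravelFromTo (E : ℕ → V → V → Prop) (T : List (V × ℕ)) (a b : V × ℕ) : Prop :=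
  IsTravel E T ∧ T.head? = some a ∧ T.getLast? = some b

/-- A travel is simple if no node appears in two non-adjacent positions. -/
def SimpleTravel (T : List (V × ℕ)) : Prop :=
  ∀ i j : Fin T.length, (i : ℕ) + 2 ≤ (j : ℕ) → (T.get i).1 ≠ (T.get j).1

/-! Exchange argument: the cost is additive under gluing travels at a shared (node, time) pair,
so replacing `T'` inside `T` by a cheaper travel `S` with the same endpoints would give a travel
from `a` to `b` cheaper than `T`. -/

section Travel

variable {E : ℕ → V → V → Prop}

theorem IsTravel.append {A B : List (V × ℕ)} {y : V × ℕ} (hA : IsTravel E A)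
    (hlast : A.getLast? = some y) (hB : IsTravel E (y :: B)) : IsTravel E (A ++ B) := by
  induction A using List.twoStepInduction with
  | nil => simp at hlast
  | singleton x => simp_all
  | cons_cons x x' A _ ih => exact ⟨hA.1, ih x' hA.2 (by simpa using hlast)⟩

theorem travelCost_append (τ : ℤ → ℝ) {A B : List (V × ℕ)} {y : V × ℕ}
    (hlast : A.getLast? = some y) :
    travelCost τ (A ++ B) = travelCost τ A + travelCost τ (y :: B) := by
  induction A using List.twoStepInduction with
  | nil => simp at hlast
  | singleton x => simp_all [travelCost]
  | cons_cons x x' A _ ih =>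
    obtain ⟨u, t⟩ := x
    obtain ⟨v, s⟩ := x'
    simp only [List.cons_append, travelCost] at ih ⊢
    rw [ih (v, s) (by simpa using hlast), add_assoc]

theorem travelCost_append_tail (τ : ℤ → ℝ) {A B : List (V × ℕ)} {y : V × ℕ}
    (hA : A.getLast? = some y) (hB : B.head? = some y) :
    travelCost τ (A ++ B.tail) = travelCost τ A + travelCost τ B := by
  obtain ⟨B, rfl⟩ := List.head?_eq_some_iff.mp hB
  exact travelCost_append τ hA

theorem TravelFromTo.append_tail {A B : List (V × ℕ)} {x y z : V × ℕ}
    (hA : TravelFromTo E A x y) (hB : TravelFromTo E B y z) :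
    TravelFromTo E (A ++ B.tail) x z := by
  obtain ⟨hA, hx, hy⟩ := hA
  obtain ⟨hB, hy', hz⟩ := hB
  obtain ⟨B, rfl⟩ := List.head?_eq_some_iff.mp hy'
  refine ⟨hA.append hy hB, ?_, ?_⟩
  · simp [List.head?_append, hx]
  · simp_all [List.getLast?_append, List.getLast?_cons]

end Travel

/-- Any sub-travel of a cost-optimal travel is cost-optimal: if
`T = T1 ⊕ T' ⊕ T2` is a cost-minimal travel from `a` to `b`, then `T'` is
cost-minimal among travels with the same endpoints as `T'`. -/
theorem subtravel_cost_optimal (E : ℕ → V → V → Prop) (τ : ℤ → ℝ)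
    (a a' b' b : V × ℕ) (T T1 T' T2 : List (V × ℕ))
    (hT1 : TravelFromTo E T1 a a') (hT' : TravelFromTo E T' a' b')
    (hT2 : TravelFromTo E T2 b' b)
    (hdecomp : T = T1 ++ T'.tail ++ T2.tail)
    (hopt : ∀ S, TravelFromTo E S a b → travelCost τ T ≤ travelCost τ S) :
    ∀ S, TravelFromTo E S a' b' → travelCost τ T' ≤ travelCost τ S := by
  have cost_splice : ∀ R, TravelFromTo E R a' b' → travelCost τ (T1 ++ R.tail ++ T2.tail) =
      travelCost τ T1 + travelCost τ R + travelCost τ T2 := fun R hR => by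
    rw [travelCost_append_tail τ (hT1.append_tail hR).2.2 hT2.2.1,
      travelCost_append_tail τ hT1.2.2 hR.2.1]
  intro S hS
  have hle := hopt _ ((hT1.append_tail hS).append_tail hT2)
  rw [hdecomp, cost_splice T' hT', cost_splice S hS] at hle
  linarith
end

section
/- If the cost function τ is non-decreasing, sub-additive, and nonnegative, then for every travel T from (src, 0) to (dst, t) there exists a simple travel T' from (src, 0) to (dst, t) with cost(T') ≤ cost(T). -/
variable {V : Type*}

section Aux

variable (E : ℕ → V → V → Prop) (τ : ℤ → ℝ)

theorem travelCost_cons_cons (x y : V × ℕ) (l : List (V × ℕ)) :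
    travelCost τ (x :: y :: l) = τ ((x.2 : ℤ) - (y.2 : ℤ)) + travelCost τ (y :: l) := by
  obtain ⟨u, t⟩ := x; obtain ⟨v, s⟩ := y; rfl

theorem travelCost_singleton (x : V × ℕ) : travelCost τ [x] = 0 := by
  obtain ⟨u, t⟩ := x; rfl

theorem tau_add2 (hzero : ∀ z : ℤ, z ≤ 0 → τ z = 0) (hnn : ∀ z : ℤ, 0 ≤ τ z)
    (hmono : ∀ a b : ℤ, 0 ≤ a → a ≤ b → τ a ≤ τ b)
    (hsub : ∀ a b : ℤ, 0 ≤ a → 0 ≤ b → τ (a + b) ≤ τ a + τ b)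
    (a b : ℤ) : τ (a + b) ≤ τ a + τ b := by
  rcases le_or_gt a 0 with ha | ha
  · rw [hzero a ha]
    rcases le_or_gt (a + b) 0 with h | h
    · rw [hzero _ h]; simpa using hnn b
    · have := hmono (a + b) b h.le (by omega); linarith
  · rcases le_or_gt b 0 with hb | hb
    · rw [hzero b hb]
      rcases le_or_gt (a + b) 0 with h | h
      · rw [hzero _ h]; simpa using hnn a
      · have := hmono (a + b) a h.le (by omega); linarith
    · exact hsub a b ha.le hb.le

theorem cost_segment (hzero : ∀ z : ℤ, z ≤ 0 → τ z = 0) (hnn : ∀ z : ℤ, 0 ≤ τ z)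
    (hmono : ∀ a b : ℤ, 0 ≤ a → a ≤ b → τ a ≤ τ b)
    (hsub : ∀ a b : ℤ, 0 ≤ a → 0 ≤ b → τ (a + b) ≤ τ a + τ b) :
    ∀ (B : List (V × ℕ)) (p q : V × ℕ),
      τ ((p.2 : ℤ) - (q.2 : ℤ)) ≤ travelCost τ (p :: B ++ [q]) := by
  intro B
  induction B with
  | nil =>
    intro p q
    rw [show p :: [] ++ [q] = p :: [q] by rfl, travelCost_cons_cons τ,
      travelCost_singleton]
    simp
  | cons r B ih =>
    intro p q
    have h1 := ih r q
    have h2 := tau_add2 τ hzero hnn hmono hsub ((p.2 : ℤ) - r.2) ((r.2 : ℤ) - q.2)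
    have h3 : ((p.2 : ℤ) - q.2) = ((p.2 : ℤ) - r.2) + ((r.2 : ℤ) - q.2) := by ring
    have h4 : travelCost τ (p :: (r :: B) ++ [q])
        = τ ((p.2 : ℤ) - r.2) + travelCost τ (r :: B ++ [q]) := by
      simp only [List.cons_append]
      rw [travelCost_cons_cons]
    rw [h3, h4]
    linarith

theorem cost_cons_append :
    ∀ (l : List (V × ℕ)) (q : V × ℕ) (C : List (V × ℕ)),
      travelCost τ (l ++ q :: C) = travelCost τ (l ++ [q]) + travelCost τ (q :: C)
  | [], q, C => by simp [travelCost_singleton]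
  | [a], q, C => by
    simp only [List.cons_append, List.nil_append, travelCost_cons_cons,
      travelCost_singleton]
    ring
  | a :: b :: l, q, C => by
    have ih := cost_cons_append (b :: l) q C
    simp only [List.cons_append] at ih ⊢
    rw [travelCost_cons_cons, travelCost_cons_cons, ih]
    ring

theorem isTravel_iff_chain' :
    ∀ L : List (V × ℕ), IsTravel E L ↔
      L.Chain' (fun p q => p.1 ≠ q.1 → p.2 = q.2 ∧ E p.2 p.1 q.1)
  | [] => by simp [IsTravel, List.Chain']
  | [a] => by simp [IsTravel, List.Chain']
  | (u, t) :: (v, s) :: rest => by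
    simp only [List.Chain', List.isChain_cons_cons]
    have ih := isTravel_iff_chain' ((v, s) :: rest)
    simp only [IsTravel, ih, List.Chain']

end Aux

theorem simple_aux (E : ℕ → V → V → Prop) (τ : ℤ → ℝ)
    (hzero : ∀ z : ℤ, z ≤ 0 → τ z = 0) (hnn : ∀ z : ℤ, 0 ≤ τ z)
    (hmono : ∀ a b : ℤ, 0 ≤ a → a ≤ b → τ a ≤ τ b)
    (hsub : ∀ a b : ℤ, 0 ≤ a → 0 ≤ b → τ (a + b) ≤ τ a + τ b) :
    ∀ n (T : List (V × ℕ)), T.length ≤ n → IsTravel E T →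
      ∃ T', IsTravel E T' ∧ T'.head? = T.head? ∧ T'.getLast? = T.getLast? ∧
        SimpleTravel T' ∧ travelCost τ T' ≤ travelCost τ T := by
  intro n
  induction n with
  | zero =>
    intro T hlen hT
    have hT0 : T = [] := List.eq_nil_of_length_eq_zero (by omega)
    subst hT0
    exact ⟨[], trivial, rfl, rfl, fun i => i.elim0, le_rfl⟩
  | succ n ih =>
    intro T hlen hT
    by_cases hs : SimpleTravel T
    · exact ⟨T, hT, rfl, rfl, hs, le_rfl⟩
    simp only [SimpleTravel, not_forall] at hs
    obtain ⟨i, j, hij, hnode⟩ := hs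
    rw [not_not] at hnode
    have hi : (i : ℕ) < T.length := i.isLt
    have hj : (j : ℕ) < T.length := j.isLt
    set A := T.take i with hA
    set B := (T.drop ((i : ℕ) + 1)).take ((j : ℕ) - i - 1) with hB
    set C := T.drop ((j : ℕ) + 1) with hC
    set p := T.get i with hp
    set q := T.get j with hq
    have h1 : T.drop (i : ℕ) = p :: T.drop ((i : ℕ) + 1) := by
      rw [List.drop_eq_getElem_cons hi]; simp [hp, List.get_eq_getElem]
    have h2 : T.drop (j : ℕ) = q :: C := by
      rw [List.drop_eq_getElem_cons hj]; simp [hq, hC, List.get_eq_getElem]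
    have h3 : T.drop ((i : ℕ) + 1) = B ++ T.drop (j : ℕ) := by
      conv_lhs => rw [← List.take_append_drop ((j : ℕ) - i - 1) (T.drop ((i : ℕ) + 1))]
      rw [List.drop_drop]
      congr 2
      omega
    have hdecomp : T = A ++ p :: (B ++ q :: C) := by
      conv_lhs => rw [← List.take_append_drop (i : ℕ) T, h1, h3, h2]
    have hBlen : 1 ≤ B.length := by
      rw [hB]
      simp only [List.length_take, List.length_drop]
      omega
    -- the shortened travel
    set T' := A ++ p :: q :: C with hT'
    have hlen' : T'.length ≤ n := by
      have e1 : T.length = A.length + (B.length + C.length) + 2 := by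
        rw [hdecomp]; simp; omega
      have e2 : T'.length = A.length + C.length + 2 := by
        rw [hT']; simp; omega
      omega
    -- T' is a travel
    have hcT : List.Chain' (fun p q : V × ℕ => p.1 ≠ q.1 → p.2 = q.2 ∧ E p.2 p.1 q.1) T :=
      (isTravel_iff_chain' E T).mp hT
    simp only [hdecomp, List.Chain', List.isChain_append] at hcT
    obtain ⟨hcA, hcrest, hjun⟩ := hcT
    rw [List.isChain_cons] at hcrest
    obtain ⟨hpb, hBqC⟩ := hcrest
    rw [List.isChain_append] at hBqC
    obtain ⟨hcB, hcqC, -⟩ := hBqC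
    have hT'travel : IsTravel E T' := by
      rw [isTravel_iff_chain', hT', List.Chain', List.isChain_append]
      refine ⟨hcA, ?_, ?_⟩
      · rw [List.isChain_cons_cons]
        exact ⟨fun h => absurd hnode h, hcqC⟩
      · intro x hx y hy
        refine hjun x hx y ?_
        simpa using hy
    -- heads and lasts
    have hhead : T'.head? = T.head? := by
      rw [hdecomp, hT']
      cases A <;> simp
    have hlast : T'.getLast? = T.getLast? := by
      rw [hdecomp, hT']
      have e1 : A ++ p :: q :: C = (A ++ [p]) ++ q :: C := by simp
      have e2 : A ++ p :: (B ++ q :: C) = (A ++ p :: B) ++ q :: C := by simp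
      rw [e1, e2, List.getLast?_append_cons, List.getLast?_append_cons]
    -- cost
    have hcost : travelCost τ T' ≤ travelCost τ T := by
      have r1 : travelCost τ T = travelCost τ (A ++ [p])
          + travelCost τ (p :: (B ++ [q])) + travelCost τ (q :: C) := by
        calc travelCost τ T = travelCost τ ((A ++ p :: B) ++ q :: C) := by
              rw [hdecomp]; simp
          _ = travelCost τ ((A ++ p :: B) ++ [q]) + travelCost τ (q :: C) :=
              cost_cons_append τ _ _ _
          _ = travelCost τ (A ++ p :: (B ++ [q])) + travelCost τ (q :: C) := by
              congr 1; simp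
          _ = travelCost τ (A ++ [p]) + travelCost τ (p :: (B ++ [q]))
              + travelCost τ (q :: C) := by
              rw [cost_cons_append τ A p (B ++ [q])]
      have r2 : travelCost τ T' = travelCost τ (A ++ [p])
          + τ ((p.2 : ℤ) - (q.2 : ℤ)) + travelCost τ (q :: C) := by
        calc travelCost τ T' = travelCost τ ((A ++ [p]) ++ q :: C) := by
              rw [hT']; simp
          _ = travelCost τ ((A ++ [p]) ++ [q]) + travelCost τ (q :: C) :=
              cost_cons_append τ _ _ _
          _ = travelCost τ (A ++ p :: [q]) + travelCost τ (q :: C) := by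
              congr 1; simp
          _ = travelCost τ (A ++ [p]) + travelCost τ (p :: [q])
              + travelCost τ (q :: C) := by rw [cost_cons_append τ A p [q]]
          _ = _ := by rw [travelCost_cons_cons, travelCost_singleton]; ring_nf
      have h5 := cost_segment τ hzero hnn hmono hsub B p q
      simp only [List.cons_append] at h5
      linarith [r1, r2, h5]
    obtain ⟨T'', hT''t, hT''h, hT''l, hT''s, hT''c⟩ := ih T' hlen' hT'travel
    exact ⟨T'', hT''t, hT''h.trans hhead, hT''l.trans hlast, hT''s, hT''c.trans hcost⟩

/-- If the cost function is nonnegative, non-decreasing (on nonnegative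
arguments) and sub-additive, then every travel from `(src, 0)` to `(dst, t)`
can be replaced by a simple travel with the same endpoints and no larger
cost. -/
theorem exists_simple_travel_of_user_friendly (E : ℕ → V → V → Prop) (τ : ℤ → ℝ)
    (hzero : ∀ z : ℤ, z ≤ 0 → τ z = 0) (hnn : ∀ z : ℤ, 0 ≤ τ z)
    (hmono : ∀ a b : ℤ, 0 ≤ a → a ≤ b → τ a ≤ τ b)
    (hsub : ∀ a b : ℤ, 0 ≤ a → 0 ≤ b → τ (a + b) ≤ τ a + τ b)
    (src dst : V) (t : ℕ)
    (T : List (V × ℕ)) (hT : TravelFromTo E T (src, 0) (dst, t)) :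
    ∃ T' : List (V × ℕ), TravelFromTo E T' (src, 0) (dst, t) ∧
      SimpleTravel T' ∧ travelCost τ T' ≤ travelCost τ T := by
  obtain ⟨htrav, hhead, hlast⟩ := hT
  obtain ⟨T', h1, h2, h3, h4, h5⟩ :=
    simple_aux E τ hzero hnn hmono hsub T.length T le_rfl htrav
  exact ⟨T', ⟨h1, h2.trans hhead, h3.trans hlast⟩, h4, h5⟩
end

section
/- For any user-optimizable cost function τ, the derived function τ̃ (obtained by first making τ non-decreasing via τ_inc(t) = min_{j≥t} τ(j), then taking the sub-additive closure over compositions) is non-decreasing, sub-additive and nonnegative, and for every travel T, cost_{τ̃}(T) ≤ cost_τ(T). -/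
variable {V : Type*}

/-- Extension of a cost function `f : ℕ → ℝ` to `ℤ`, zero on nonpositive
arguments. -/
noncomputable def extZ (f : ℕ → ℝ) : ℤ → ℝ := fun z => if 0 < z then f z.toNat else 0

noncomputable def subClose (g : ℕ → ℝ) : ℕ → ℝ
  | 0 => 0
  | n+1 => ((Finset.range (n+1)).attach).inf'
      (by simp) (fun k => g (n+1-k.1) + subClose g k.1)
decreasing_by
  exact Finset.mem_range.mp k.2

lemma subClose_zero (g : ℕ → ℝ) : subClose g 0 = 0 := by rw [subClose]

lemma subClose_nonneg (g : ℕ → ℝ) (hg : ∀ x, 0 ≤ g x) : ∀ n, 0 ≤ subClose g n := by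
  intro n
  induction n using Nat.strong_induction_on with
  | _ n ih =>
    cases n with
    | zero => simp [subClose_zero]
    | succ n =>
      rw [subClose.eq_2]
      apply Finset.le_inf'
      intro k _
      exact add_nonneg (hg _) (ih k.1 (Finset.mem_range.mp k.2))

lemma subClose_le (g : ℕ → ℝ) :
    ∀ a : List ℕ, (∀ x ∈ a, 0 < x) → subClose g a.sum ≤ (a.map g).sum := by
  intro a
  induction a with
  | nil => simp [subClose_zero]
  | cons x rest ih =>
    intro hpos
    have hx : 0 < x := hpos x (by simp)
    have hsum : (x :: rest).sum = x + rest.sum := by simp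
    obtain ⟨n, hn⟩ : ∃ n, x + rest.sum = n + 1 := ⟨x + rest.sum - 1, by omega⟩
    rw [hsum, hn, subClose.eq_2]
    have hmem : rest.sum ∈ Finset.range (n+1) := by
      rw [Finset.mem_range]; omega
    calc ((Finset.range (n+1)).attach).inf' (by simp)
          (fun k => g (n+1-k.1) + subClose g k.1)
        ≤ g (n+1-rest.sum) + subClose g rest.sum :=
          Finset.inf'_le _ (Finset.mem_attach _ ⟨rest.sum, hmem⟩)
      _ ≤ g x + (rest.map g).sum := by
          have : n + 1 - rest.sum = x := by omega
          rw [this]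
          exact add_le_add_right (ih (fun y hy => hpos y (by simp [hy]))) _
      _ = ((x :: rest).map g).sum := by simp

lemma subClose_exists (g : ℕ → ℝ) :
    ∀ n, 1 ≤ n → ∃ a : List ℕ, (∀ x ∈ a, 0 < x) ∧ a.sum = n ∧
      subClose g n = (a.map g).sum := by
  intro n
  induction n using Nat.strong_induction_on with
  | _ n ih =>
    intro hn
    obtain ⟨m, rfl⟩ : ∃ m, n = m + 1 := ⟨n - 1, by omega⟩
    obtain ⟨k, -, hk⟩ := Finset.exists_mem_eq_inf' (s := (Finset.range (m+1)).attach)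
      (by simp) (fun k => g (m+1-k.1) + subClose g k.1)
    have hklt : k.1 < m + 1 := Finset.mem_range.mp k.2
    rcases Nat.eq_zero_or_pos k.1 with h0 | h1
    · refine ⟨[m+1], by simp, by simp, ?_⟩
      rw [subClose.eq_2, hk, h0, subClose_zero]
      simp
    · obtain ⟨a, hapos, hasum, haeq⟩ := ih k.1 hklt h1
      refine ⟨(m+1-k.1) :: a, ?_, ?_, ?_⟩
      · intro x hx
        rcases List.mem_cons.mp hx with rfl | hx
        · omega
        · exact hapos x hx
      · simp [hasum]; omega
      · rw [subClose.eq_2, hk]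
        simp [haeq]

lemma subClose_mono (g : ℕ → ℝ) (hg : ∀ x, 0 ≤ g x) (hmono : Monotone g) :
    Monotone (subClose g) := by
  apply monotone_nat_of_le_succ
  intro n
  obtain ⟨a, hapos, hasum, haeq⟩ := subClose_exists g (n+1) (by omega)
  rw [haeq]
  cases a with
  | nil => simp at hasum
  | cons x rest =>
    have hx : 0 < x := hapos x (by simp)
    have hxr : x + rest.sum = n + 1 := by simpa using hasum
    rcases Nat.lt_or_ge x 2 with hx1 | hx2
    · have hx1 : x = 1 := by omega
      have hr : rest.sum = n := by omega
      calc subClose g n = subClose g rest.sum := by rw [hr]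
        _ ≤ (rest.map g).sum := subClose_le g rest (fun y hy => hapos y (by simp [hy]))
        _ ≤ ((x :: rest).map g).sum := by simp [hg x]
    · have : ((x-1) :: rest).sum = n := by simp; omega
      calc subClose g n = subClose g ((x-1)::rest).sum := by rw [this]
        _ ≤ (((x-1) :: rest).map g).sum := subClose_le g _ (by
            intro y hy
            rcases List.mem_cons.mp hy with rfl | hy
            · omega
            · exact hapos y (by simp [hy]))
        _ ≤ ((x :: rest).map g).sum := by
            simp only [List.map_cons, List.sum_cons]
            exact add_le_add_left (hmono (by omega)) _

lemma subClose_subadd (g : ℕ → ℝ) (hg : ∀ x, 0 ≤ g x) (s t : ℕ) :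
    subClose g (s + t) ≤ subClose g s + subClose g t := by
  rcases Nat.eq_zero_or_pos s with rfl | hs
  · simp [subClose_zero]
  rcases Nat.eq_zero_or_pos t with rfl | ht
  · simp [subClose_zero]
  obtain ⟨a, hapos, hasum, haeq⟩ := subClose_exists g s hs
  obtain ⟨b, hbpos, hbsum, hbeq⟩ := subClose_exists g t ht
  have h1 : (a ++ b).sum = s + t := by simp [hasum, hbsum]
  calc subClose g (s + t) = subClose g (a ++ b).sum := by rw [h1]
    _ ≤ ((a ++ b).map g).sum := subClose_le g _ (by
        intro x hx
        rcases List.mem_append.mp hx with hx | hx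
        exacts [hapos x hx, hbpos x hx])
    _ = subClose g s + subClose g t := by simp [haeq, hbeq]

lemma travelCost_mono (f g : ℤ → ℝ) (h : ∀ z, f z ≤ g z) :
    ∀ T : List (V × ℕ), travelCost f T ≤ travelCost g T
  | [] => le_refl 0
  | [_] => le_refl 0
  | (u, t) :: (v, s) :: rest => by
      simp only [travelCost]
      exact add_le_add (h _) (travelCost_mono f g h ((v, s) :: rest))


/-- For a user-optimizable `τ` (nonnegative, attaining its minimum on every
`[C, ∞)` with `C > 0`), the derived function `τ̃` — obtained by first taking
`τ_inc (t) = min_{j ≥ t} τ j` and then the sub-additive closure over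
compositions — is non-decreasing, sub-additive and nonnegative, and every
travel satisfies `cost_{τ̃} T ≤ cost_τ T`. -/
theorem user_friendly_transform (τ : ℕ → ℝ) (hnn : ∀ t, 0 ≤ τ t)
    (hatt : ∀ C : ℕ, 0 < C → ∃ j, C ≤ j ∧ ∀ k, C ≤ k → τ j ≤ τ k) :
    ∃ τinc τt : ℕ → ℝ,
      (∀ t : ℕ, (∃ j, t ≤ j ∧ τinc t = τ j) ∧ (∀ j, t ≤ j → τinc t ≤ τ j)) ∧
      τt 0 = 0 ∧
      (∀ t : ℕ, 1 ≤ t →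
        (∃ a : List ℕ, (∀ x ∈ a, 0 < x) ∧ a.sum = t ∧ τt t = (a.map τinc).sum) ∧
        (∀ a : List ℕ, (∀ x ∈ a, 0 < x) → a.sum = t → τt t ≤ (a.map τinc).sum)) ∧
      Monotone τt ∧ (∀ s t : ℕ, τt (s + t) ≤ τt s + τt t) ∧ (∀ t, 0 ≤ τt t) ∧
      (∀ (E : ℕ → V → V → Prop) (T : List (V × ℕ)), IsTravel E T →
        travelCost (extZ τt) T ≤ travelCost (extZ τ) T) := by
  have hatt0 : ∀ C : ℕ, ∃ j, C ≤ j ∧ ∀ k, C ≤ k → τ j ≤ τ k := by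
    intro C
    rcases Nat.eq_zero_or_pos C with rfl | hC
    · obtain ⟨j, hj, hmin⟩ := hatt 1 one_pos
      rcases le_total (τ 0) (τ j) with h | h
      · exact ⟨0, le_refl 0, fun k _ => by
          rcases Nat.eq_zero_or_pos k with rfl | hk
          · exact le_refl _
          · exact h.trans (hmin k hk)⟩
      · exact ⟨j, Nat.zero_le j, fun k _ => by
          rcases Nat.eq_zero_or_pos k with rfl | hk
          · exact h
          · exact hmin k hk⟩
    · exact hatt C hC
  set τinc : ℕ → ℝ := fun t => τ (Classical.choose (hatt0 t)) with hτinc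
  have hspec : ∀ t, t ≤ Classical.choose (hatt0 t) ∧
      ∀ k, t ≤ k → τinc t ≤ τ k := fun t => Classical.choose_spec (hatt0 t)
  have hincnn : ∀ t, 0 ≤ τinc t := fun t => hnn _
  have hincmono : Monotone τinc := by
    intro s t hst
    have h1 := (hspec t).1
    exact (hspec s).2 _ (hst.trans h1)
  refine ⟨τinc, subClose τinc, ?_, subClose_zero τinc, ?_, ?_, ?_, ?_, ?_⟩
  · intro t
    exact ⟨⟨Classical.choose (hatt0 t), (hspec t).1, rfl⟩, (hspec t).2⟩
  · intro t ht
    refine ⟨subClose_exists τinc t ht, fun a hpos hsum => ?_⟩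
    rw [← hsum]; exact subClose_le τinc a hpos
  · exact subClose_mono τinc hincnn hincmono
  · exact subClose_subadd τinc hincnn
  · exact subClose_nonneg τinc hincnn
  · intro E T _
    apply travelCost_mono
    intro z
    unfold extZ
    split
    · next hz =>
      have h1 : 1 ≤ z.toNat := by omega
      calc subClose τinc z.toNat ≤ τinc z.toNat := by
            have := subClose_le τinc [z.toNat] (by intro x hx; simp at hx; omega)
            simpa using this
        _ ≤ τ z.toNat := (hspec z.toNat).2 _ (le_refl _)
    · exact le_refl 0
end
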